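/- arXiv:2212.05520 — 3 statements merged into one kernel-verified Lean document; each statement's English description precedes it below -/
import Mathlib

section
/- There exists an a.d.-family 𝒜 of subsets of ℕ of cardinality continuum such that the Banach space (X_𝒜, ‖·‖_{∞,2}) is nonseparable and its unit sphere is the union of countably many sets, each of diameter strictly less than 1. -/
open Set Filter Cardinal

noncomputable section

/-- The Banach space `ℓ∞` of bounded real sequences with the sup norm. -/
abbrev Linfty : Type := lp (fun _ : ℕ => ℝ) ⊤

/-- An a.d.-family: an uncountable family of infinite subsets of `ℕ` which is
pairwise almost disjoint. -/
def ADFamily (𝒜 : Set (Set ℕ)) : Prop :=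
  ¬𝒜.Countable ∧ (∀ A ∈ 𝒜, A.Infinite) ∧
    ∀ A ∈ 𝒜, ∀ B ∈ 𝒜, A ≠ B → (A ∩ B).Finite

/-- A maximal a.d.-family. -/
def MaximalADFamily (𝒜 : Set (Set ℕ)) : Prop :=
  ADFamily 𝒜 ∧ ∀ X : Set ℕ, X.Infinite → ∃ A ∈ 𝒜, (X ∩ A).Infinite

/-- `A =* B` : the symmetric difference is finite. -/
def eqStar (A B : Set ℕ) : Prop := (symmDiff A B).Finite

/-- Finite subfamilies `a`, `b` of `𝒜` represent the pair `p`. -/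
def Represents (𝒜 : Set (Set ℕ)) (p : Set ℕ × Set ℕ) (a b : Finset (Set ℕ)) : Prop :=
  ↑a ⊆ 𝒜 ∧ ↑b ⊆ 𝒜 ∧ eqStar p.1 (⋃ A ∈ a, A) ∧ eqStar p.2 (⋃ B ∈ b, B)

/-- `p` is a condition of the splitting partial order `ℙ_𝒜`. -/
def SplitCond (𝒜 : Set (Set ℕ)) (p : Set ℕ × Set ℕ) : Prop :=
  p.1 ∩ p.2 = ∅ ∧ ∃ a b : Finset (Set ℕ), Represents 𝒜 p a b

/-- `Extends p q` means `p ≤ q` in `ℙ_𝒜`. -/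
def Extends (p q : Set ℕ × Set ℕ) : Prop := q.1 ⊆ p.1 ∧ q.2 ⊆ p.2

/-- Compatibility in `ℙ_𝒜`. -/
def Compat (𝒜 : Set (Set ℕ)) (p q : Set ℕ × Set ℕ) : Prop :=
  ∃ r, SplitCond 𝒜 r ∧ Extends r p ∧ Extends r q

/-- An antichain of `ℙ_𝒜`: a set of pairwise incompatible conditions. -/
def SplitAntichain (𝒜 : Set (Set ℕ)) (P : Set (Set ℕ × Set ℕ)) : Prop :=
  (∀ p ∈ P, SplitCond 𝒜 p) ∧ ∀ p ∈ P, ∀ q ∈ P, p ≠ q → ¬Compat 𝒜 p q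

/-- `ℙ_𝒜` satisfies the countable chain condition. -/
def SplitCCC (𝒜 : Set (Set ℕ)) : Prop :=
  ∀ P : Set (Set ℕ × Set ℕ), SplitAntichain 𝒜 P → P.Countable

/-- A centered subset of `ℙ_𝒜`: every finite subset has a common lower bound in `ℙ_𝒜`. -/
def SplitCentered (𝒜 : Set (Set ℕ)) (P : Set (Set ℕ × Set ℕ)) : Prop :=
  ∀ F : Finset (Set ℕ × Set ℕ), ↑F ⊆ P →
    ∃ r, SplitCond 𝒜 r ∧ ∀ p ∈ F, Extends r p

/-- `ℙ_𝒜` is σ-centered. -/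
def SplitSigmaCentered (𝒜 : Set (Set ℕ)) : Prop :=
  ∃ P : ℕ → Set (Set ℕ × Set ℕ),
    (⋃ n, P n) = {p | SplitCond 𝒜 p} ∧ ∀ n, SplitCentered 𝒜 (P n)

/-- `ℙ_𝒜` has precaliber `κ`. -/
def SplitPrecaliber (𝒜 : Set (Set ℕ)) (κ : Cardinal) : Prop :=
  ∀ P : Set (Set ℕ × Set ℕ), (∀ p ∈ P, SplitCond 𝒜 p) → #P = κ →
    ∃ Q ⊆ P, #Q = κ ∧ SplitCentered 𝒜 Q

/-- Two conditions are essentially distinct if their (uniquely determined)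
representing finite subfamilies differ on both coordinates. -/
def EssDistinct (𝒜 : Set (Set ℕ)) (p q : Set ℕ × Set ℕ) : Prop :=
  ∀ ap bp aq bq : Finset (Set ℕ), Represents 𝒜 p ap bp → Represents 𝒜 q aq bq →
    ap ≠ aq ∧ bp ≠ bq

/-- An antiramsey a.d.-family. -/
def Antiramsey (𝒜 : Set (Set ℕ)) : Prop :=
  ADFamily 𝒜 ∧
  ∀ P : Set (Set ℕ × Set ℕ), (∀ p ∈ P, SplitCond 𝒜 p) → ¬P.Countable →
    (∀ p ∈ P, ∀ q ∈ P, p ≠ q → EssDistinct 𝒜 p q) →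
    (∃ p ∈ P, ∃ q ∈ P, p ≠ q ∧ Compat 𝒜 p q) ∧ (∃ p ∈ P, ∃ q ∈ P, ¬Compat 𝒜 p q)

/-- The first uncountable ordinal. -/
def omega1 : Ordinal.{0} := (Cardinal.aleph 1).ord

/-- A Luzin family. -/
def IsLuzinFamily (𝒜 : Set (Set ℕ)) : Prop :=
  ADFamily 𝒜 ∧ ∃ A : Ordinal.{0} → Set ℕ,
    (∀ ξ < omega1, A ξ ∈ 𝒜) ∧
    (∀ B ∈ 𝒜, ∃ ξ < omega1, A ξ = B) ∧
    (∀ ξ < omega1, ∀ η < omega1, ξ ≠ η → A ξ ≠ A η) ∧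
    ∀ η < omega1, ∀ m : ℕ, {ξ : Ordinal | ξ < η ∧ sSup (A ξ ∩ A η) = m}.Finite

/-- `(B i : i < n)` forms an `n`-Luzin gap. -/
def IsNLuzinGap (n : ℕ) (B : Fin n → Ordinal.{0} → Set ℕ) : Prop :=
  (∀ i : Fin n, ∀ α < omega1, ∀ β < omega1, α ≠ β → B i α ≠ B i β) ∧
  (∀ i j : Fin n, i ≠ j → ∀ α < omega1, ∀ β < omega1, B i α ≠ B j β) ∧
  ∃ m : ℕ,
    (∀ i j : Fin n, i < j → ∀ α < omega1, B i α ∩ B j α ⊆ Set.Iio m) ∧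
    (∀ α < omega1, ∀ β < omega1, α ≠ β →
      ¬(⋃ (i : Fin n) (j : Fin n) (_ : i ≠ j), B i α ∩ B j β) ⊆ Set.Iio m)

/-- `𝒜` contains an `n`-Luzin gap. -/
def ContainsNLuzinGap (𝒜 : Set (Set ℕ)) (n : ℕ) : Prop :=
  ∃ B : Fin n → Ordinal.{0} → Set ℕ,
    (∀ i : Fin n, ∀ α < omega1, B i α ∈ 𝒜) ∧ IsNLuzinGap n B

-- The characteristic function of `A ⊆ ℕ` as an element of `ℓ∞`.
open Classical in
def indicatorLinfty (A : Set ℕ) : Linfty :=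
  ⟨fun n => if n ∈ A then (1 : ℝ) else 0, by
    apply memℓp_infty
    refine ⟨1, ?_⟩
    rintro x ⟨n, rfl⟩
    dsimp only
    split <;> simp⟩

/-- The subset `c₀` of `ℓ∞`. -/
def c0Set : Set Linfty := {f | Tendsto (fun n => f n) atTop (nhds 0)}

/-- The Johnson–Lindenstrauss space `X_𝒜`: the closed linear span of
`c₀ ∪ {1_A : A ∈ 𝒜}` in `ℓ∞`, as a (closed) submodule. -/
def XA (𝒜 : Set (Set ℕ)) : Submodule ℝ Linfty :=
  (Submodule.span ℝ (c0Set ∪ indicatorLinfty '' 𝒜)).topologicalClosure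

/-- The norm `‖·‖_{∞,2}` on `ℓ∞`. -/
def norm12 (f : Linfty) : ℝ :=
  ‖f‖ + Real.sqrt (∑' n : ℕ, (f n) ^ 2 / 2 ^ (n + 1))

/-- The unit sphere of `(X_𝒜, ‖·‖∞)`. -/
def sphereInf (𝒜 : Set (Set ℕ)) : Set Linfty :=
  {f : Linfty | f ∈ XA 𝒜 ∧ ‖f‖ = 1}

/-- The unit sphere of `(X_𝒜, ‖·‖_{∞,2})`. -/
def sphere12 (𝒜 : Set (Set ℕ)) : Set Linfty :=
  {f : Linfty | f ∈ XA 𝒜 ∧ norm12 f = 1}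

/-- The Open Coloring Axiom. -/
def OCA : Prop :=
  ∀ (X : Type) [MetricSpace X], TopologicalSpace.SeparableSpace X →
    ∀ K : Set (X × X), IsOpen K → (∀ x y : X, (x, y) ∈ K → (y, x) ∈ K) →
      (∃ Y : Set X, ¬Y.Countable ∧ ∀ x ∈ Y, ∀ y ∈ Y, x ≠ y → (x, y) ∈ K) ∨
      (∃ C : ℕ → Set X, (⋃ n, C n) = Set.univ ∧
        ∀ n, ∀ x ∈ C n, ∀ y ∈ C n, x ≠ y → (x, y) ∉ K)

/-- An `ℝ`-embeddable a.d.-family. -/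
def REmbeddable (𝒜 : Set (Set ℕ)) : Prop :=
  ∃ (f : ℕ → ℚ) (r : Set ℕ → ℝ), Function.Injective f ∧
    (∀ A ∈ 𝒜, Irrational (r A) ∧
      ∀ ε : ℝ, 0 < ε → {n ∈ A | ε ≤ |(f n : ℝ) - r A|}.Finite) ∧
    (∀ A ∈ 𝒜, ∀ B ∈ 𝒜, A ≠ B → r A ≠ r B)

/-- The Continuum Hypothesis. -/
def CH : Prop := (Cardinal.continuum : Cardinal.{0}) = Cardinal.aleph 1

end

/-!
Let `A_x` be the set of indices, in an enumeration `(q_k)` of `ℚ`, of a sequence of rationals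
increasing to `x`. Distinct reals are distinct limits, so `{A_x : x ∈ ℝ}` is an a.d.-family of
size continuum, and its indicators, pairwise at sup-distance `1`, make `X_𝒜` nonseparable.

A point `x` of the `‖·‖_{∞,2}`-sphere is nonzero, so its weighted `ℓ²` part is at least some
`ρ = 1 / (m + 1)` and `‖x‖∞ ≤ 1 - ρ`. Up to `ρ / 16`, `x = y + ∑ c_i 1_{A_{x_i}}` with `y ∈ c₀`,
so far out the non-small coordinates of `x` sit at indices `k` with `q_k` in one of finitely many
disjoint rational intervals around the `x_i`, where `x k ≈ c_i`. Recording `m`, rational values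
of the first `n` coordinates, and the intervals with rational values `≈ c_i` sorts the sphere
into countably many pieces. Two points of one piece are, at each coordinate, either both near the
same value or one of them is small, so their sup-distance is at most about `1 - ρ`; they are
close on the first `n` coordinates, which carry all but `2 ^ (-n)` of the weight. So each piece
has `‖·‖_{∞,2}`-diameter at most `1 - ρ / 2`.
-/

open Topology

namespace JohnsonLindenstrauss

lemma abs_apply_le_norm (f : Linfty) (k : ℕ) : |f k| ≤ ‖f‖ := by
  simpa only [Real.norm_eq_abs] using lp.norm_apply_le_norm ENNReal.top_ne_zero f k

open Classical in
lemma indicatorLinfty_apply (A : Set ℕ) (k : ℕ) :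
    indicatorLinfty A k = if k ∈ A then 1 else 0 := rfl

lemma one_le_norm_indicatorLinfty_sub {A B : Set ℕ} (h : (A \ B).Nonempty) :
    1 ≤ ‖indicatorLinfty A - indicatorLinfty B‖ := by
  obtain ⟨k, hkA, hkB⟩ := h
  have hk : (indicatorLinfty A - indicatorLinfty B) k = 1 := by
    simp [indicatorLinfty_apply, hkA, hkB]
  simpa [hk] using abs_apply_le_norm (indicatorLinfty A - indicatorLinfty B) k

lemma tendsto_of_mem_span_c0Set {y : Linfty} (hy : y ∈ Submodule.span ℝ c0Set) :
    Tendsto (fun k => y k) atTop (𝓝 0) := by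
  induction hy using Submodule.span_induction with
  | mem z hz => exact hz
  | zero => simp
  | add u v _ _ hu hv => simpa using hu.add hv
  | smul a u _ hu => simpa using hu.const_mul a

noncomputable def l2Part (f : Linfty) : ℝ := √(∑' k, f k ^ 2 / 2 ^ (k + 1))

lemma norm12_eq (f : Linfty) : norm12 f = ‖f‖ + l2Part f := rfl

lemma l2Part_nonneg (f : Linfty) : 0 ≤ l2Part f := Real.sqrt_nonneg _

lemma norm_le_norm12 (f : Linfty) : ‖f‖ ≤ norm12 f := by
  linarith [norm12_eq f, l2Part_nonneg f]

lemma hasSum_div_two_pow_succ (a : ℝ) : HasSum (fun k : ℕ => a / 2 ^ (k + 1)) a := by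
  simpa only [div_div, ← pow_succ'] using hasSum_geometric_two' a

lemma summable_weightedSq (z : Linfty) : Summable fun k => z k ^ 2 / 2 ^ (k + 1) := by
  refine (hasSum_div_two_pow_succ (‖z‖ ^ 2)).summable.of_nonneg_of_le (fun k => by positivity)
    fun k => ?_
  gcongr ?_ / _
  exact sq_le_sq.mpr ((abs_apply_le_norm z k).trans (le_abs_self _))

lemma tsum_weightedSq_le {z : Linfty} {n : ℕ} {ε : ℝ} (hhead : ∀ k < n, |z k| ≤ ε) :
    ∑' k, z k ^ 2 / 2 ^ (k + 1) ≤ ε ^ 2 + ‖z‖ ^ 2 * (1 / 2) ^ n := by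
  rw [← (summable_weightedSq z).sum_add_tsum_nat_add n]
  gcongr
  · calc ∑ k ∈ Finset.range n, z k ^ 2 / 2 ^ (k + 1)
        ≤ ∑ k ∈ Finset.range n, ε ^ 2 / 2 ^ (k + 1) := by
          refine Finset.sum_le_sum fun k hk => ?_
          gcongr ?_ / _
          exact sq_le_sq.mpr ((hhead k (Finset.mem_range.mp hk)).trans (le_abs_self _))
      _ ≤ ε ^ 2 := (hasSum_div_two_pow_succ _).summable.sum_le_tsum _ (fun _ _ => by positivity)
          |>.trans_eq (hasSum_div_two_pow_succ _).tsum_eq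
  · calc ∑' i, z (i + n) ^ 2 / 2 ^ (i + n + 1)
        ≤ ∑' i : ℕ, ‖z‖ ^ 2 * (1 / 2) ^ n / 2 ^ (i + 1) := by
          refine ((summable_nat_add_iff n).mpr (summable_weightedSq z)).tsum_le_tsum (fun i => ?_)
            (hasSum_div_two_pow_succ _).summable
          rw [show (2 : ℝ) ^ (i + n + 1) = 2 ^ n * 2 ^ (i + 1) by ring, one_div_pow,
            mul_one_div, div_div]
          gcongr ?_ / _
          exact sq_le_sq.mpr ((abs_apply_le_norm z _).trans (le_abs_self _))
      _ = ‖z‖ ^ 2 * (1 / 2) ^ n := (hasSum_div_two_pow_succ _).tsum_eq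

lemma l2Part_pos {z : Linfty} (hz : z ≠ 0) : 0 < l2Part z := by
  obtain ⟨k, hk⟩ : ∃ k, z k ≠ 0 := by
    by_contra! h
    exact hz (lp.ext (funext h))
  exact Real.sqrt_pos.mpr <|
    (summable_weightedSq z).tsum_pos (fun _ => by positivity) k (by positivity)

lemma l2Part_le_of_head {z : Linfty} {n : ℕ} {ε η : ℝ} (hη : 0 ≤ η)
    (hhead : ∀ k < n, |z k| ≤ ε) (hn : ε ^ 2 + ‖z‖ ^ 2 * (1 / 2) ^ n ≤ η ^ 2) : l2Part z ≤ η :=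
  (Real.sqrt_le_sqrt ((tsum_weightedSq_le hhead).trans hn)).trans_eq (Real.sqrt_sq hη)

lemma norm_eq_of_mem_sphere12 {𝒜 : Set (Set ℕ)} {x : Linfty} (hx : x ∈ sphere12 𝒜) :
    ‖x‖ = 1 - l2Part x := by
  linarith [norm12_eq x, hx.2]

lemma l2Part_pos_of_mem_sphere12 {𝒜 : Set (Set ℕ)} {x : Linfty} (hx : x ∈ sphere12 𝒜) :
    0 < l2Part x := by
  refine l2Part_pos fun h => ?_
  have h1 := hx.2
  simp [h, norm12] at h1

lemma abs_sub_le_of_near {a b g r δ : ℝ} (ha : |a| ≤ r) (hb : |b| ≤ r)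
    (ha' : |a - g| ≤ δ ∨ |a| ≤ δ) (hb' : |b - g| ≤ δ ∨ |b| ≤ δ) : |a - b| ≤ r + δ := by
  simp only [abs_le] at ha hb ha' hb' ⊢
  rcases ha' with ha' | ha' <;> rcases hb' with hb' | hb' <;> constructor <;> linarith

lemma norm12_sub_le_of_near {g : ℕ → ℝ} {n : ℕ} {r δ : ℝ} {x y : Linfty} (hr : r ≤ 1)
    (hδ : 0 ≤ δ) (hn : (1 / 2 : ℝ) ^ n ≤ δ ^ 2) (hx : ‖x‖ ≤ r) (hy : ‖y‖ ≤ r)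
    (hxh : ∀ k < n, |x k - g k| ≤ δ) (hyh : ∀ k < n, |y k - g k| ≤ δ)
    (hxt : ∀ k, |x k - g k| ≤ δ ∨ |x k| ≤ δ) (hyt : ∀ k, |y k - g k| ≤ δ ∨ |y k| ≤ δ) :
    norm12 (x - y) ≤ r + 4 * δ := by
  have hsup : ‖x - y‖ ≤ r + δ :=
    lp.norm_le_of_forall_le (by linarith [norm_nonneg x]) fun k => by
      simpa using abs_sub_le_of_near ((abs_apply_le_norm x k).trans hx)
        ((abs_apply_le_norm y k).trans hy) (hxt k) (hyt k)
  have hhead : ∀ k < n, |(x - y) k| ≤ 2 * δ := fun k hk => by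
    have := abs_sub_le (x k) (g k) (y k)
    rw [abs_sub_comm (g k)] at this
    simp only [lp.coeFn_sub, Pi.sub_apply]
    linarith [hxh k hk, hyh k hk]
  have hl2 : l2Part (x - y) ≤ 3 * δ := by
    refine l2Part_le_of_head (by positivity) hhead ?_
    have : ‖x - y‖ ^ 2 ≤ 2 ^ 2 :=
      pow_le_pow_left₀ (norm_nonneg _) ((norm_sub_le x y).trans (by linarith)) 2
    nlinarith [pow_nonneg (by norm_num : (0 : ℝ) ≤ 1 / 2) n]
  linarith [norm12_eq (x - y)]

def piece (𝒜 : Set (Set ℕ)) (ρ : ℝ) (n : ℕ) (g : ℕ → ℝ) : Set Linfty :=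
  {x | x ∈ sphere12 𝒜 ∧ ρ ≤ l2Part x ∧ (1 / 2 : ℝ) ^ n ≤ (ρ / 8) ^ 2 ∧
    (∀ k < n, |x k - g k| ≤ ρ / 8) ∧ ∀ k, |x k - g k| ≤ ρ / 8 ∨ |x k| ≤ ρ / 8}

lemma norm12_sub_le_of_mem_piece {𝒜 : Set (Set ℕ)} {ρ : ℝ} {n : ℕ} {g : ℕ → ℝ} {x y : Linfty}
    (hx : x ∈ piece 𝒜 ρ n g) (hy : y ∈ piece 𝒜 ρ n g) : norm12 (x - y) ≤ 1 - ρ / 2 := by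
  obtain ⟨hxs, hxρ, hn, hxh, hxt⟩ := hx
  obtain ⟨hys, hyρ, -, hyh, hyt⟩ := hy
  have hδ : 0 ≤ ρ / 8 := (hxt 0).elim (abs_nonneg _).trans (abs_nonneg _).trans
  have h := norm12_sub_le_of_near (r := 1 - ρ) (by linarith) hδ hn
    (by linarith [norm_eq_of_mem_sphere12 hxs]) (by linarith [norm_eq_of_mem_sphere12 hys])
    hxh hyh hxt hyt
  linarith

lemma tendsto_cofinite_inf_principal_range {α β γ : Type*} {g : α → β} {f : β → γ}
    {l : Filter γ} (h : Tendsto (f ∘ g) cofinite l) : Tendsto f (cofinite ⊓ 𝓟 (range g)) l := by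
  refine (tendsto_map'_iff.mpr h).mono_left fun s hs => ?_
  rw [mem_inf_principal, mem_cofinite]
  refine ((mem_cofinite.mp hs).image g).subset ?_
  intro b hb
  simp only [mem_compl_iff, mem_ofPred_eq, Classical.not_imp] at hb
  obtain ⟨⟨a, rfl⟩, ha⟩ := hb
  exact ⟨a, ha, rfl⟩

section Convergent

variable {f : ℕ → ℝ} {A : ℝ → Set ℕ}

/-- Two limits along an infinite set of indices coincide. -/
lemma finite_inter_of_tendsto (hA : ∀ x, Tendsto f (cofinite ⊓ 𝓟 (A x)) (𝓝 x)) {x y : ℝ}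
    (hxy : x ≠ y) : (A x ∩ A y).Finite := by
  by_contra h
  have := cofinite_inf_principal_neBot_iff.mpr h
  exact hxy <| tendsto_nhds_unique
    ((hA x).mono_left (inf_le_inf_left _ (principal_mono.mpr inter_subset_left)))
    ((hA y).mono_left (inf_le_inf_left _ (principal_mono.mpr inter_subset_right)))

lemma injective_of_tendsto (hA : ∀ x, Tendsto f (cofinite ⊓ 𝓟 (A x)) (𝓝 x))
    (hinf : ∀ x, (A x).Infinite) : Function.Injective A := by
  intro x y hxy
  by_contra hne
  exact hinf x (by simpa [hxy] using finite_inter_of_tendsto hA hne)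

lemma mk_range_of_tendsto (hA : ∀ x, Tendsto f (cofinite ⊓ 𝓟 (A x)) (𝓝 x))
    (hinf : ∀ x, (A x).Infinite) : #(range A) = 𝔠 := by
  rw [mk_range_eq A (injective_of_tendsto hA hinf), mk_real]

lemma adFamily_range_of_tendsto (hA : ∀ x, Tendsto f (cofinite ⊓ 𝓟 (A x)) (𝓝 x))
    (hinf : ∀ x, (A x).Infinite) : ADFamily (range A) := by
  refine ⟨fun hc => not_countable_real ?_, forall_mem_range.mpr hinf, ?_⟩
  · simpa using hc.preimage (injective_of_tendsto hA hinf)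
  · rintro _ ⟨x, rfl⟩ _ ⟨y, rfl⟩ hne
    exact finite_inter_of_tendsto hA fun h => hne (h ▸ rfl)

end Convergent

lemma indicatorLinfty_mem_XA {𝒜 : Set (Set ℕ)} {A : Set ℕ} (hA : A ∈ 𝒜) :
    indicatorLinfty A ∈ XA 𝒜 :=
  Submodule.le_topologicalClosure _ (Submodule.subset_span (Or.inr ⟨A, hA, rfl⟩))

theorem not_exists_countable_dense_of_adFamily {𝒜 : Set (Set ℕ)} (h𝒜 : ADFamily 𝒜) :
    ¬∃ D : Set Linfty, D.Countable ∧ D ⊆ (XA 𝒜 : Set Linfty) ∧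
      ∀ f ∈ XA 𝒜, ∀ ε : ℝ, 0 < ε → ∃ g ∈ D, norm12 (f - g) < ε := by
  rintro ⟨D, hD, -, hdense⟩
  choose g hgD hg using fun A : 𝒜 => hdense _ (indicatorLinfty_mem_XA A.2) (1 / 2) one_half_pos
  have hinj : Function.Injective fun A : 𝒜 => (⟨g A, hgD A⟩ : D) := by
    rintro ⟨A, hA⟩ ⟨B, hB⟩ hAB
    by_contra hne
    have hdiff : (A \ B).Nonempty := by
      have := (h𝒜.2.1 A hA).sdiff (h𝒜.2.2 A hA B hB fun h => hne (Subtype.ext h))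
      exact (this.mono (by simp)).nonempty
    have hgAB : g ⟨A, hA⟩ = g ⟨B, hB⟩ := congrArg Subtype.val hAB
    have hgA : ‖indicatorLinfty A - g ⟨A, hA⟩‖ < 1 / 2 := (norm_le_norm12 _).trans_lt (hg ⟨A, hA⟩)
    have hgB : ‖indicatorLinfty B - g ⟨A, hA⟩‖ < 1 / 2 := by
      rw [hgAB]; exact (norm_le_norm12 _).trans_lt (hg ⟨B, hB⟩)
    have := norm_sub_le (indicatorLinfty A - g ⟨A, hA⟩) (indicatorLinfty B - g ⟨A, hA⟩)
    rw [sub_sub_sub_cancel_right] at this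
    linarith [one_le_norm_indicatorLinfty_sub hdiff]
  have := hD.to_subtype
  exact h𝒜.1 (countable_coe_iff.mp hinj.countable)

lemma exists_c0_add_sum_near {ι : Type*} (A : ι → Set ℕ) {x : Linfty} (hx : x ∈ XA (range A))
    {ε : ℝ} (hε : 0 < ε) : ∃ y ∈ c0Set, ∃ c : ι →₀ ℝ,
      ‖x - (y + c.sum fun i a => a • indicatorLinfty (A i))‖ < ε := by
  rw [XA, ← SetLike.mem_coe, Submodule.topologicalClosure_coe] at hx
  obtain ⟨z, hz, hxz⟩ := Metric.mem_closure_iff.mp hx ε hε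
  rw [SetLike.mem_coe, Submodule.span_union, ← range_comp] at hz
  obtain ⟨y, hy, w, hw, rfl⟩ := Submodule.mem_sup.mp hz
  obtain ⟨c, rfl⟩ := Finsupp.mem_span_range_iff_exists_finsupp.mp hw
  exact ⟨y, tendsto_of_mem_span_c0Set hy, c, by rwa [← dist_eq_norm]⟩

open Classical in
lemma sum_smul_indicatorLinfty_apply {ι : Type*} (A : ι → Set ℕ) (c : ι →₀ ℝ) (k : ℕ) :
    (c.sum fun i a => a • indicatorLinfty (A i)) k =
      ∑ i ∈ c.support, if k ∈ A i then c i else 0 := by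
  simp only [Finsupp.sum, lp.coeFn_sum, Finset.sum_apply, lp.coeFn_smul, Pi.smul_apply,
    smul_eq_mul, indicatorLinfty_apply, mul_ite, mul_one, mul_zero]

lemma exists_rat_Ioo_subset {x : ℝ} {U : Set ℝ} (hU : U ∈ 𝓝 x) :
    ∃ a b : ℚ, ((a : ℝ) < x ∧ x < b) ∧ Ioo (a : ℝ) b ⊆ U := by
  obtain ⟨l, u, ⟨hl, hu⟩, hlu⟩ := mem_nhds_iff_exists_Ioo_subset.mp hU
  obtain ⟨a, hla, hax⟩ := exists_rat_btwn hl
  obtain ⟨b, hxb, hbu⟩ := exists_rat_btwn hu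
  exact ⟨a, b, ⟨hax, hxb⟩, (Ioo_subset_Ioo hla.le hbu.le).trans hlu⟩

lemma exists_pairwiseDisjoint_Ioo_rat (s : Finset ℝ) : ∃ a b : ℝ → ℚ,
    (∀ i, (a i : ℝ) < i ∧ i < b i) ∧
      (s : Set ℝ).PairwiseDisjoint fun i => Ioo (a i : ℝ) (b i) := by
  obtain ⟨U, hU, hdisj⟩ := s.finite_toSet.t2_separation
  choose a b hab hsub using fun i => exists_rat_Ioo_subset ((hU i).2.mem_nhds (hU i).1)
  exact ⟨a, b, hab, hdisj.mono hsub⟩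

noncomputable def template (f : ℕ → ℝ) (head : List ℚ) (J : Finset (ℚ × ℚ × ℚ)) (k : ℕ) : ℝ :=
  if h : k < head.length then head[k] else
    ∑ j ∈ J, if f k ∈ Ioo (j.1 : ℝ) j.2.1 then (j.2.2 : ℝ) else 0

open Classical in
/-- Beyond `head`, the disjointness of the intervals puts `k` in at most one `A i`. -/
lemma sum_ite_mem_eq_coeff_or_zero {f : ℕ → ℝ} {A : ℝ → Set ℕ} {s : Finset ℝ} {a b : ℝ → ℚ}
    (hdisj : (s : Set ℝ).PairwiseDisjoint fun i => Ioo (a i : ℝ) (b i)) (c : ℝ → ℝ) (q : ℝ → ℚ)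
    (head : List ℚ) {k : ℕ} (hk : head.length ≤ k)
    (hkA : ∀ i ∈ s, k ∈ A i → f k ∈ Ioo (a i : ℝ) (b i)) :
    (∃ i ∈ s, (∑ j ∈ s, if k ∈ A j then c j else 0) = c i ∧
      template f head (s.image fun i => (a i, b i, q i)) k = q i) ∨
    (∑ j ∈ s, if k ∈ A j then c j else 0) = 0 := by
  by_cases h : ∃ i ∈ s, k ∈ A i
  · obtain ⟨i, hi, hki⟩ := h
    have hfk := hkA i hi hki
    have hother : ∀ j ∈ s, j ≠ i → f k ∉ Ioo (a j : ℝ) (b j) := fun j hj hji hfj =>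
      Set.disjoint_left.mp (hdisj hj hi hji) hfj hfk
    refine Or.inl ⟨i, hi, ?_, ?_⟩
    · rw [Finset.sum_eq_single_of_mem i hi fun j hj hji => if_neg fun hkj =>
        hother j hj hji (hkA j hj hkj), if_pos hki]
    · rw [template, dif_neg (not_lt.mpr hk),
        Finset.sum_eq_single_of_mem (a i, b i, q i)
          (Finset.mem_image_of_mem (fun i => (a i, b i, q i)) hi), if_pos hfk]
      rintro _ ht hne
      obtain ⟨j, hj, rfl⟩ := Finset.mem_image.mp ht
      exact if_neg (hother j hj fun hji => hne (hji ▸ rfl))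
  · simp only [not_exists, not_and] at h
    exact Or.inr (Finset.sum_eq_zero fun j hj => if_neg (h j hj))

theorem exists_mem_piece {f : ℕ → ℝ} {A : ℝ → Set ℕ}
    (hA : ∀ x, Tendsto f (cofinite ⊓ 𝓟 (A x)) (𝓝 x)) {x : Linfty} (hx : x ∈ sphere12 (range A)) :
    ∃ (m : ℕ) (head : List ℚ) (J : Finset (ℚ × ℚ × ℚ)),
      x ∈ piece (range A) (1 / (m + 1)) head.length (template f head J) := by
  classical
  obtain ⟨m, hm⟩ := exists_nat_one_div_lt (l2Part_pos_of_mem_sphere12 hx)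
  set δ : ℝ := 1 / ((m : ℝ) + 1) / 8
  have hδ : 0 < δ := by positivity
  obtain ⟨y, hy, c, hxz⟩ := exists_c0_add_sum_near A hx.1 (half_pos hδ)
  obtain ⟨a, b, hab, hdisj⟩ := exists_pairwiseDisjoint_Ioo_rat c.support
  choose q hq using fun i => exists_rat_near (c i) (by positivity : (0 : ℝ) < δ / 4)
  have hev : ∀ᶠ k in atTop,
      |y k| < δ / 4 ∧ ∀ i ∈ c.support, k ∈ A i → f k ∈ Ioo (a i : ℝ) (b i) := by
    refine ((by simpa using (hy : Tendsto (fun k => y k) atTop (𝓝 0)).abs :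
      Tendsto (fun k => |y k|) atTop (𝓝 0)).eventually_lt_const (by positivity)).and ?_
    rw [eventually_all_finset, ← Nat.cofinite_eq_atTop]
    exact fun i _ =>
      eventually_inf_principal.mp ((hA i).eventually (Ioo_mem_nhds (hab i).1 (hab i).2))
  obtain ⟨N, hN⟩ := eventually_atTop.mp hev
  obtain ⟨n, hnpow, hnN⟩ := (((tendsto_pow_atTop_nhds_zero_of_lt_one (by norm_num)
    (by norm_num : (1 / 2 : ℝ) < 1)).eventually_lt_const (by positivity : 0 < δ ^ 2)).and
    (eventually_ge_atTop N)).exists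
  choose τ hτ using fun k : Fin n => exists_rat_near (x k) hδ
  set J := c.support.image fun i => (a i, b i, q i)
  have hhead : ∀ k < (List.ofFn τ).length, |x k - template f (List.ofFn τ) J k| ≤ δ := by
    intro k hk
    have hkn : k < n := by simpa using hk
    simpa [template, hkn] using (hτ ⟨k, hkn⟩).le
  have htail : ∀ k, n ≤ k → |x k - template f (List.ofFn τ) J k| ≤ δ ∨ |x k| ≤ δ := by
    intro k hk
    have hxk : |x k - y k - ∑ i ∈ c.support, if k ∈ A i then c i else 0| < δ / 2 := by
      simpa [sum_smul_indicatorLinfty_apply, sub_sub] using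
        (abs_apply_le_norm _ k).trans_lt hxz
    obtain ⟨hyk, hkA⟩ := hN k (hnN.trans hk)
    rw [abs_lt] at hxk hyk
    rcases sum_ite_mem_eq_coeff_or_zero hdisj c q (List.ofFn τ) (by simpa using hk) hkA with
      ⟨i, -, hsum, htemp⟩ | hsum
    · have := abs_lt.mp (hq i)
      rw [hsum] at hxk
      exact Or.inl (abs_le.mpr (by rw [htemp]; constructor <;> linarith))
    · rw [hsum] at hxk
      exact Or.inr (abs_le.mpr (by constructor <;> linarith))
  refine ⟨m, List.ofFn τ, J, hx, hm.le, by rw [List.length_ofFn]; exact hnpow.le, hhead,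
    fun k => ?_⟩
  rcases lt_or_ge k n with hk | hk
  · exact Or.inl (hhead k (by simpa using hk))
  · exact htail k hk

theorem sphere12_eq_iUnion_piece {f : ℕ → ℝ} {A : ℝ → Set ℕ}
    (hA : ∀ x, Tendsto f (cofinite ⊓ 𝓟 (A x)) (𝓝 x)) :
    sphere12 (range A) = ⋃ t : ℕ × List ℚ × Finset (ℚ × ℚ × ℚ),
      piece (range A) (1 / (t.1 + 1)) t.2.1.length (template f t.2.1 t.2.2) := by
  ext x
  refine ⟨fun hx => ?_, fun hx => (mem_iUnion.mp hx).choose_spec.1⟩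
  obtain ⟨m, head, J, h⟩ := exists_mem_piece hA hx
  exact mem_iUnion.mpr ⟨(m, head, J), h⟩

noncomputable def ratEnum (k : ℕ) : ℝ := ((Denumerable.eqv ℚ).symm k : ℝ)

noncomputable def ratSeq (x : ℝ) : ℕ → ℚ := (Real.exists_seq_rat_strictMono_tendsto x).choose

/-- The indices, in the enumeration `ratEnum`, of a sequence of rationals increasing to `x`. -/
noncomputable def approxSet (x : ℝ) : Set ℕ := range (Denumerable.eqv ℚ ∘ ratSeq x)

lemma approxSet_infinite (x : ℝ) : (approxSet x).Infinite :=
  infinite_range_of_injective <| (Denumerable.eqv ℚ).injective.comp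
    (Real.exists_seq_rat_strictMono_tendsto x).choose_spec.1.injective

lemma tendsto_ratEnum_approxSet (x : ℝ) :
    Tendsto ratEnum (cofinite ⊓ 𝓟 (approxSet x)) (𝓝 x) :=
  tendsto_cofinite_inf_principal_range <| by
    simpa [Function.comp_def, ratEnum, ratSeq, Nat.cofinite_eq_atTop] using
      (Real.exists_seq_rat_strictMono_tendsto x).choose_spec.2.2

end JohnsonLindenstrauss

open JohnsonLindenstrauss

/-- There exists an a.d.-family `𝒜` of subsets of `ℕ` of cardinality continuum
such that the Banach space `(X_𝒜, ‖·‖_{∞,2})` is nonseparable and its unit sphere is the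
union of countably many sets, each of diameter strictly less than `1`. -/
theorem statement0 :
    ∃ 𝒜 : Set (Set ℕ), ADFamily 𝒜 ∧ Cardinal.mk 𝒜 = Cardinal.continuum ∧
      (¬∃ D : Set Linfty, D.Countable ∧ D ⊆ (XA 𝒜 : Set Linfty) ∧
        ∀ f ∈ XA 𝒜, ∀ ε : ℝ, 0 < ε → ∃ g ∈ D, norm12 (f - g) < ε) ∧
      ∃ S : ℕ → Set Linfty, sphere12 𝒜 = ⋃ n, S n ∧
        ∀ n, ∃ d : ℝ, d < 1 ∧ ∀ x ∈ S n, ∀ y ∈ S n, norm12 (x - y) ≤ d := by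
  have hA := tendsto_ratEnum_approxSet
  have hAD := adFamily_range_of_tendsto hA approxSet_infinite
  refine ⟨range approxSet, hAD, mk_range_of_tendsto hA approxSet_infinite,
    not_exists_countable_dense_of_adFamily hAD, ?_⟩
  obtain ⟨e, he⟩ := exists_surjective_nat (ℕ × List ℚ × Finset (ℚ × ℚ × ℚ))
  refine ⟨fun n => piece (range approxSet) (1 / ((e n).1 + 1)) (e n).2.1.length
    (template ratEnum (e n).2.1 (e n).2.2), ?_, fun n => ⟨1 - 1 / ((e n).1 + 1) / 2, ?_,
      fun x hx y hy => norm12_sub_le_of_mem_piece hx hy⟩⟩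
  · rw [sphere12_eq_iUnion_piece hA, ← he.iUnion_comp]
  · have : (0 : ℝ) < 1 / ((e n).1 + 1) := by positivity
    linarith
end

section
/- Let 𝒜 be a Luzin family, let n ∈ ℕ with n ≥ 2, and let 𝒞_0, …, 𝒞_{n−1} ⊆ 𝒜 be uncountable subfamilies. Then for each i < n there is an uncountable ℬ_i ⊆ 𝒞_i such that (ℬ_i : i < n) is an n-Luzin gap. -/
open Set Filter Cardinal

/-!
Enumerate the Luzin family as `A ξ`, `ξ < ω₁`. A transfinite recursion along `ω₁ ×ₗ Fin n`
picks strictly increasing indices `t (α, i)` with `A (t (α, i)) ∈ 𝒞 i`; put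
`X α i = A (t (α, i))`. By pigeonhole, uncountably many tuples `X α` have their internal
intersections below one bound `m`. For `β` fixed, the Luzin property at `t (β, 1)` leaves only
finitely many `α < β` whose cross intersections with the tuple `X β` all lie below `m`. So the
graph of these "bad" pairs has finite back-degree along a well-order and is countably colourable
by a greedy colouring; an uncountable colour class, re-enumerated in type `ω₁`, is an
`n`-Luzin gap.
-/

open Function

section Omega1

theorem mk_Iio_omega1 : #(Iio omega1) = ℵ₁ := by
  rw [Cardinal.mk_Iio_ordinal, omega1, Cardinal.card_ord, Cardinal.lift_aleph]
  simp

theorem countable_Iio_of_lt_omega1 {γ : Ordinal.{0}} (hγ : γ < omega1) : (Iio γ).Countable := by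
  rw [← le_aleph0_iff_set_countable, Cardinal.mk_Iio_ordinal, lift_le_aleph0,
    ← lt_aleph_one_iff, ← Cardinal.lt_ord]
  exact hγ

theorem countable_Iic_of_lt_omega1 {γ : Ordinal.{0}} (hγ : γ < omega1) : (Iic γ).Countable := by
  rw [← Iio_insert]
  exact (countable_Iio_of_lt_omega1 hγ).insert γ

theorem countable_Iio_subtype_Iio_omega1 (a : Iio omega1) : (Iio a).Countable :=
  (countable_Iio_of_lt_omega1 a.2).preimage Subtype.val_injective

theorem not_countable_Iio_omega1 : ¬(Iio omega1).Countable := by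
  rw [← le_aleph0_iff_set_countable, not_le, ← aleph_one_le_iff, mk_Iio_omega1]

instance : Uncountable (Iio omega1) := by
  refine not_countable_univ_iff.1 fun h => not_countable_Iio_omega1 ?_
  simpa only [image_univ, Subtype.range_coe] using h.image Subtype.val

theorem iSup_lt_omega1 {ι : Type*} [Countable ι] {f : ι → Ordinal.{0}}
    (hf : ∀ i, f i < omega1) : ⨆ i, f i < omega1 := by
  rw [omega1, Cardinal.ord_aleph] at hf ⊢
  exact Ordinal.iSup_lt_omega_one hf

theorem exists_mem_gt_of_not_countable {S : Set Ordinal.{0}} (hS : ¬S.Countable)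
    {γ : Ordinal.{0}} (hγ : γ < omega1) : (S ∩ Ioi γ).Nonempty := by
  by_contra h
  refine hS ((countable_Iic_of_lt_omega1 hγ).mono fun ξ hξ => ?_)
  exact not_lt.1 fun (hlt : γ < ξ) => h ⟨ξ, hξ, hlt⟩

theorem exists_mapsTo_injOn_Iio_omega1 {β : Type*} {T : Set β} (hT : ¬T.Countable) :
    ∃ e : Ordinal.{0} → β, MapsTo e (Iio omega1) T ∧ InjOn e (Iio omega1) := by
  obtain ⟨x₀, -⟩ : T.Nonempty := nonempty_iff_ne_empty.2 fun h => hT (h ▸ countable_empty)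
  obtain ⟨f⟩ : Nonempty (Iio omega1 ↪ T) := by
    rw [← le_aleph0_iff_set_countable, not_le, ← aleph_one_le_iff] at hT
    rw [← Cardinal.lift_mk_le', mk_Iio_omega1]
    simpa using hT
  refine ⟨fun α => if h : α < omega1 then f ⟨α, h⟩ else x₀, fun α hα => ?_, fun α hα β hβ h => ?_⟩
  · simp only [dif_pos (show α < omega1 from hα), Subtype.coe_prop]
  · simp only [dif_pos (show α < omega1 from hα), dif_pos (show β < omega1 from hβ)] at h
    exact congrArg Subtype.val (f.injective (Subtype.val_injective h))

theorem countable_Iio_lex {α β : Type*} [LinearOrder α] [Preorder β] [Countable β]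
    (hα : ∀ a : α, (Iio a).Countable) (k : α ×ₗ β) : (Iio k).Countable := by
  refine ((((hα (ofLex k).1).insert (ofLex k).1).prod countable_univ).image toLex).mono ?_
  intro x hx
  refine ⟨ofLex x, ⟨?_, mem_univ _⟩, rfl⟩
  rw [Iio_insert, mem_Iic]
  rcases Prod.Lex.lt_iff.1 hx with h | ⟨h, -⟩
  exacts [h.le, h.le]

theorem exists_strictMono_mem_of_not_countable {ι : Type*} [LinearOrder ι] [WellFoundedLT ι]
    (hι : ∀ k : ι, (Iio k).Countable) (S : ι → Set Ordinal.{0})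
    (hS : ∀ k, S k ⊆ Iio omega1) (hSu : ∀ k, ¬(S k).Countable) :
    ∃ t : ι → Ordinal.{0}, StrictMono t ∧ ∀ k, t k ∈ S k := by
  let t : ι → Ordinal.{0} := wellFounded_lt.fix fun k IH =>
    sInf (S k ∩ Ioi (⨆ j : Iio k, IH j j.2))
  have ht k : t k = sInf (S k ∩ Ioi (⨆ j : Iio k, t j)) := wellFounded_lt.fix_eq _ k
  have hmem k : t k ∈ S k ∩ Ioi (⨆ j : Iio k, t j) := by
    induction k using WellFoundedLT.induction with
    | _ k IH =>
      have : Countable (Iio k) := (hι k).to_subtype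
      have hsup : ⨆ j : Iio k, t j < omega1 := iSup_lt_omega1 fun j => hS j (IH j j.2).1
      rw [ht]
      exact csInf_mem (exists_mem_gt_of_not_countable (hSu k) hsup)
  refine ⟨t, fun j k hjk => ?_, fun k => (hmem k).1⟩
  have : Countable (Iio k) := (hι k).to_subtype
  exact (Ordinal.le_iSup (fun i : Iio k => t i) ⟨j, hjk⟩).trans_lt (hmem k).2

end Omega1

section FreeSets

theorem Set.exists_not_countable_fiber {α β : Type*} [Countable β] {s : Set α}
    (hs : ¬s.Countable) (f : α → β) : ∃ b, ¬{x ∈ s | f x = b}.Countable := by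
  by_contra! h
  refine hs ((countable_iUnion h).mono fun x hx => ?_)
  exact mem_iUnion.2 ⟨f x, hx, rfl⟩

theorem exists_coloring_of_finite_lt {W : Type*} [LT W] [WellFoundedLT W] (F : W → Set W)
    (hlt : ∀ b, ∀ a ∈ F b, a < b) (hfin : ∀ b, (F b).Finite) :
    ∃ c : W → ℕ, ∀ b, ∀ a ∈ F b, c a ≠ c b := by
  let c : W → ℕ := wellFounded_lt.fix fun b IH =>
    sInf {k | ∀ a (h : a ∈ F b), IH a (hlt b a h) ≠ k}
  have hc b : c b = sInf {k | ∀ a ∈ F b, c a ≠ k} := wellFounded_lt.fix_eq _ b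
  refine ⟨c, fun b a ha => ?_⟩
  have hne : {k | ∀ a ∈ F b, c a ≠ k}.Nonempty := by
    obtain ⟨k, hk⟩ := ((hfin b).image c).infinite_compl.nonempty
    exact ⟨k, fun a ha hak => hk ⟨a, ha, hak⟩⟩
  rw [hc b]
  exact Nat.sInf_mem hne a ha

theorem exists_not_countable_subset_forall_not_mem {W : Type*} [LT W] [WellFoundedLT W]
    {T : Set W} (hT : ¬T.Countable) (F : W → Set W)
    (hlt : ∀ b, ∀ a ∈ F b, a < b) (hfin : ∀ b, (F b).Finite) :
    ∃ T' ⊆ T, ¬T'.Countable ∧ ∀ a ∈ T', ∀ b ∈ T', a ∉ F b := by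
  obtain ⟨c, hc⟩ := exists_coloring_of_finite_lt F hlt hfin
  obtain ⟨k, hk⟩ := Set.exists_not_countable_fiber hT c
  exact ⟨_, fun x hx => hx.1, hk, fun a ha b hb hab => hc b a hab (ha.2.trans hb.2.symm)⟩

end FreeSets

section CrossInter

variable {β : Type*} {n : ℕ} (X : β → Fin n → Set ℕ)

def crossInter (a b : β) : Set ℕ := ⋃ (i : Fin n) (j : Fin n) (_ : i ≠ j), X a i ∩ X b j

variable {X}

theorem inter_subset_crossInter {i j : Fin n} (hij : i ≠ j) (a b : β) :
    X a i ∩ X b j ⊆ crossInter X a b :=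
  subset_iUnion₂_of_subset i j (subset_iUnion_of_subset hij subset_rfl)

theorem crossInter_comm (a b : β) : crossInter X a b = crossInter X b a := by
  rw [crossInter, iUnion_comm]
  simp only [inter_comm (X a _), ne_comm, crossInter]

theorem crossInter_self_finite {a : β} (h : ∀ i j, i ≠ j → (X a i ∩ X a j).Finite) :
    (crossInter X a a).Finite :=
  finite_iUnion fun i => finite_iUnion fun j => finite_iUnion fun hij => h i j hij

theorem isNLuzinGap_of_crossInter (hX : Injective (uncurry X)) {T : Set β} {m : ℕ}
    (hin : ∀ a ∈ T, crossInter X a a ⊆ Iio m)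
    (hcross : ∀ a ∈ T, ∀ b ∈ T, a ≠ b → ¬crossInter X a b ⊆ Iio m)
    {e : Ordinal.{0} → β} (heT : MapsTo e (Iio omega1) T) (he : InjOn e (Iio omega1)) :
    IsNLuzinGap n fun i α => X (e α) i := by
  refine ⟨fun i α hα α' hα' hne h => ?_, fun i j hij α _ α' _ h => ?_, m, ?_, ?_⟩
  · exact hne (he hα hα' (congrArg Prod.fst (@hX (e α, i) (e α', i) h)))
  · exact hij (congrArg Prod.snd (@hX (e α, i) (e α', j) h))
  · exact fun i j hij α hα => (inter_subset_crossInter hij.ne _ _).trans (hin _ (heT hα))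
  · exact fun α hα α' hα' hne => hcross _ (heT hα) _ (heT hα') (he.ne hα hα' hne)

end CrossInter

theorem exists_not_countable_gap_indices {W : Type*} [LinearOrder W] [WellFoundedLT W]
    [Uncountable W] {n : ℕ} (hn : 2 ≤ n) (X : W → Fin n → Set ℕ)
    (had : ∀ a i j, i ≠ j → (X a i ∩ X a j).Finite)
    (hX : ∀ b i j m, {a | a < b ∧ X a i ∩ X b j ⊆ Iio m}.Finite) :
    ∃ T : Set W, ¬T.Countable ∧ ∃ m, (∀ a ∈ T, crossInter X a a ⊆ Iio m) ∧
      ∀ a ∈ T, ∀ b ∈ T, a ≠ b → ¬crossInter X a b ⊆ Iio m := by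
  have hbound a : ∃ m, crossInter X a a ⊆ Iio m := by
    obtain ⟨m, hm⟩ := (crossInter_self_finite (had a)).bddAbove
    exact ⟨m + 1, fun x hx => Nat.lt_succ_of_le (hm hx)⟩
  choose M hM using hbound
  obtain ⟨m, hm⟩ := Set.exists_not_countable_fiber not_countable_univ M
  let i₀ : Fin n := ⟨0, by omega⟩
  let i₁ : Fin n := ⟨1, by omega⟩
  have hF b : {a | a < b ∧ crossInter X a b ⊆ Iio m}.Finite :=
    (hX b i₀ i₁ m).subset fun a ha =>
      ⟨ha.1, (inter_subset_crossInter (by simp [i₀, i₁]) a b).trans ha.2⟩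
  obtain ⟨T, hTm, hT, hfree⟩ :=
    exists_not_countable_subset_forall_not_mem hm _ (fun _ _ => And.left) hF
  refine ⟨T, hT, m, fun a ha => (hTm ha).2 ▸ hM a, fun a ha b hb hab hsub => ?_⟩
  rcases hab.lt_or_gt with h | h
  · exact hfree a ha b hb ⟨h, hsub⟩
  · exact hfree b hb a ha ⟨h, crossInter_comm a b ▸ hsub⟩

theorem finite_setOf_subset_Iio_of_finite_sSup {ι : Type*} (p : ι → Prop) (f : ι → Set ℕ)
    (h : ∀ k, {x | p x ∧ sSup (f x) = k}.Finite) (m : ℕ) : {x | p x ∧ f x ⊆ Iio m}.Finite :=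
  ((finite_Iic m).biUnion fun k _ => h k).subset fun x ⟨hp, hx⟩ =>
    mem_biUnion (x := sSup (f x)) (csSup_le' fun _ hy => (hx hy).le) ⟨hp, rfl⟩

theorem IsLuzinFamily.exists_tuples {𝒜 : Set (Set ℕ)} (h𝒜 : IsLuzinFamily 𝒜) {n : ℕ}
    {𝒞 : Fin n → Set (Set ℕ)} (h𝒞 : ∀ i, 𝒞 i ⊆ 𝒜) (h𝒞un : ∀ i, ¬(𝒞 i).Countable) :
    ∃ X : Iio omega1 → Fin n → Set ℕ, Injective (uncurry X) ∧
      (∀ a i, X a i ∈ 𝒞 i) ∧ (∀ a i j, i ≠ j → (X a i ∩ X a j).Finite) ∧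
      ∀ b i j m, {a | a < b ∧ X a i ∩ X b j ⊆ Iio m}.Finite := by
  obtain ⟨⟨-, -, hAD⟩, A, -, hAsurj, hAinj, hLuzin⟩ := h𝒜
  let S i := Iio omega1 ∩ A ⁻¹' 𝒞 i
  have hS i : ¬(S i).Countable := fun h => h𝒞un i ((h.image A).mono fun C hC => by
    obtain ⟨ξ, hξ, rfl⟩ := hAsurj C (h𝒞 i hC)
    exact ⟨ξ, ⟨hξ, hC⟩, rfl⟩)
  obtain ⟨t, ht, htS⟩ := exists_strictMono_mem_of_not_countable
    (countable_Iio_lex countable_Iio_subtype_Iio_omega1)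
    (fun k : Iio omega1 ×ₗ Fin n => S (ofLex k).2) (fun _ => inter_subset_left) (fun _ => hS _)
  let X a i := A (t (toLex (a, i)))
  have hXinj : Injective (uncurry X) := fun p q h => by
    by_contra hpq
    exact hAinj _ (htS _).1 _ (htS _).1 (ht.injective.ne (toLex.injective.ne hpq)) h
  have hX𝒞 a i : X a i ∈ 𝒞 i := (htS (toLex (a, i))).2
  refine ⟨X, hXinj, hX𝒞, fun a i j hij => ?_, fun b i j m => ?_⟩
  · exact hAD _ (h𝒞 i (hX𝒞 a i)) _ (h𝒞 j (hX𝒞 a j))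
      fun h => hij (congrArg Prod.snd (@hXinj (a, i) (a, j) h))
  · -- `a < b` puts `t (a, i)` below `η`, where the Luzin property applies
    let η := t (toLex (b, j))
    refine ((finite_setOf_subset_Iio_of_finite_sSup (· < η) (fun ξ => A ξ ∩ A η)
      (hLuzin η (htS _).1) m).preimage ?_).subset fun a ha => ⟨?_, ha.2⟩
    · exact (ht.injective.comp (toLex.injective.comp fun a a' h => by simpa using h)).injOn
    · exact ht (Prod.Lex.toLex_lt_toLex.2 (Or.inl ha.1))

/-- a Luzin family contains an `n`-Luzin gap inside any `n` uncountable
subfamilies. -/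
theorem statement2 (𝒜 : Set (Set ℕ)) (h𝒜 : IsLuzinFamily 𝒜) (n : ℕ) (hn : 2 ≤ n)
    (𝒞 : Fin n → Set (Set ℕ)) (h𝒞 : ∀ i, 𝒞 i ⊆ 𝒜) (h𝒞un : ∀ i, ¬(𝒞 i).Countable) :
    ∃ B : Fin n → Ordinal.{0} → Set ℕ,
      (∀ i : Fin n, ∀ α < omega1, B i α ∈ 𝒞 i) ∧ IsNLuzinGap n B := by
  obtain ⟨X, hXinj, hX𝒞, had, hX⟩ := h𝒜.exists_tuples h𝒞 h𝒞un
  obtain ⟨T, hT, m, hin, hcross⟩ := exists_not_countable_gap_indices hn X had hX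
  obtain ⟨e, heT, he⟩ := exists_mapsTo_injOn_Iio_omega1 hT
  exact ⟨fun i α => X (e α) i, fun i α _ => hX𝒞 _ i,
    isNLuzinGap_of_crossInter hXinj hin hcross heT he⟩
end

section
/- Suppose 𝒜 is an a.d.-family. If the splitting partial order ℙ_𝒜 fails to satisfy the c.c.c. (i.e., has an uncountable antichain), then 𝒜 contains an n-Luzin gap for some n ∈ ℕ. -/
open Set Filter Cardinal

/-!
Represent each condition `p` of an uncountable antichain by finite families `a p`, `b p`. Only
countably many conditions have a given support `a p ∪ b p`, so the Δ-system lemma and pigeonholing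
yield an uncountable subfamily whose supports form a Δ-system with root `R`, which all agree with
`(⋃ a p, ⋃ b p)` from one `m` on, whose supports consist of sets pairwise disjoint from `m` on,
and which look alike below `m` and on `R`. Two such conditions `p ≠ q` are incompatible only
through a point `x ∈ p.1 ∩ q.2` (or symmetrically); then `x ≥ m` and `x` lies in some member of
`a p \ R` and some member of `b q \ R`. Enumerating the sets `(a p ∪ b p) \ R` uniformly gives
an `n`-Luzin gap.
-/

open Function

theorem Finset.exists_injective_fin_of_card_eq {α : Type*} {s : Finset α} {n : ℕ}
    (h : s.card = n) : ∃ w : Fin n → α, Injective w ∧ Set.range w = s := by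
  refine ⟨fun i => (s.equivFinOfCardEq h).symm i,
    Subtype.val_injective.comp (Equiv.injective _), ?_⟩
  rw [range_comp' Subtype.val, Equiv.range_eq_univ, image_univ, Subtype.range_coe]

section DeltaSystem

variable {ι X β : Type*}

theorem Set.exists_uncountable_subset_fiber {S : Set ι} (hS : ¬S.Countable) (f : ι → β)
    (hf : (f '' S).Countable) : ∃ y, ∃ T ⊆ S, ¬T.Countable ∧ ∀ p ∈ T, f p = y := by
  obtain ⟨y, hy⟩ : ∃ y, ¬(S ∩ f ⁻¹' {y}).Countable := by
    by_contra! h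
    refine hS ((hf.biUnion fun y _ => h y).mono ?_)
    exact fun p hp => mem_biUnion (mem_image_of_mem f hp) ⟨hp, rfl⟩
  exact ⟨y, _, inter_subset_left, hy, fun p hp => hp.2⟩

/-- A maximal pairwise disjoint subfamily is uncountable: were it countable, every member of `𝒞`
would meet its countable union, and each point lies in only countably many members. -/
theorem exists_uncountable_pairwise_disjoint {𝒞 : Set (Finset X)} (h𝒞 : ¬𝒞.Countable)
    (hpt : ∀ x, {s ∈ 𝒞 | x ∈ s}.Countable) :
    ∃ 𝒟 ⊆ 𝒞, ¬𝒟.Countable ∧ 𝒟.Pairwise Disjoint := by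
  obtain ⟨M, hM⟩ := zorn_subset {M | M ⊆ 𝒞 ∧ M.Pairwise Disjoint} fun c hc hchain =>
    ⟨⋃₀ c, ⟨sUnion_subset fun M hM => (hc hM).1, hchain.pairwise_sUnion.2 fun M hM => (hc hM).2⟩,
      fun _ => subset_sUnion_of_mem⟩
  refine ⟨M, hM.prop.1, fun hMc => h𝒞 ?_, hM.prop.2⟩
  have hpts : (⋃ s ∈ M, (s : Set X)).Countable := hMc.biUnion fun s _ => s.countable_toSet
  refine (hMc.union (hpts.biUnion fun x _ => hpt x)).mono fun t ht => ?_
  by_cases htM : t ∈ M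
  · exact Or.inl htM
  have hins : ¬(insert t M).Pairwise Disjoint := fun h =>
    htM (hM.2 ⟨insert_subset ht hM.prop.1, h⟩ (subset_insert t M) (mem_insert t M))
  rw [pairwise_insert_of_symm] at hins
  push Not at hins
  obtain ⟨s, hs, -, hts⟩ := hins hM.prop.2
  obtain ⟨x, hxt, hxs⟩ := Finset.not_disjoint_iff.1 hts
  exact Or.inr (mem_biUnion (mem_biUnion hs hxs) ⟨ht, hxt⟩)

variable [DecidableEq X]

theorem exists_delta_system_of_card_eq (n : ℕ) {𝒞 : Set (Finset X)} (h𝒞 : ¬𝒞.Countable)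
    (hcard : ∀ s ∈ 𝒞, s.card = n) :
    ∃ R, ∃ 𝒟 ⊆ 𝒞, ¬𝒟.Countable ∧ 𝒟.Pairwise fun s t => s ∩ t = R := by
  induction n generalizing 𝒞 with
  | zero =>
    exact absurd ((countable_singleton ∅).mono fun s hs => Finset.card_eq_zero.1 (hcard s hs)) h𝒞
  | succ n ih =>
    by_cases hx : ∃ x, ¬{s ∈ 𝒞 | x ∈ s}.Countable
    · obtain ⟨x, hx⟩ := hx
      have herase : ¬((·.erase x) '' {s ∈ 𝒞 | x ∈ s}).Countable := by
        refine fun hc => hx ((hc.image (insert x)).mono ?_)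
        exact fun s hs => ⟨s.erase x, mem_image_of_mem _ hs, Finset.insert_erase hs.2⟩
      obtain ⟨R, 𝒟, h𝒟, h𝒟u, hR⟩ := ih herase (by
        rintro _ ⟨s, ⟨hs, hxs⟩, rfl⟩
        simp [Finset.card_erase_of_mem hxs, hcard s hs])
      refine ⟨insert x R, insert x '' 𝒟, ?_, fun hc => h𝒟u ?_, ?_⟩
      · rintro _ ⟨t, ht, rfl⟩
        obtain ⟨s, ⟨hs, hxs⟩, rfl⟩ := h𝒟 ht
        rwa [Finset.insert_erase hxs]
      · refine (hc.image (·.erase x)).mono fun t ht => ?_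
        refine ⟨insert x t, mem_image_of_mem _ ht, ?_⟩
        obtain ⟨s, -, rfl⟩ := h𝒟 ht
        exact Finset.erase_insert (Finset.notMem_erase x s)
      · rintro _ ⟨s, hs, rfl⟩ _ ⟨t, ht, rfl⟩ hst
        rw [← Finset.insert_inter_distrib, hR hs ht fun h => hst (h ▸ rfl)]
    · push Not at hx
      obtain ⟨𝒟, h𝒟, h𝒟u, hdisj⟩ := exists_uncountable_pairwise_disjoint h𝒞 hx
      exact ⟨∅, 𝒟, h𝒟, h𝒟u, hdisj.mono' fun s t => Finset.disjoint_iff_inter_eq_empty.1⟩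

theorem exists_delta_system {𝒞 : Set (Finset X)} (h𝒞 : ¬𝒞.Countable) :
    ∃ R, ∃ 𝒟 ⊆ 𝒞, ¬𝒟.Countable ∧ 𝒟.Pairwise fun s t => s ∩ t = R := by
  obtain ⟨n, 𝒞', h𝒞', hu, hcard⟩ := exists_uncountable_subset_fiber h𝒞 Finset.card (to_countable _)
  obtain ⟨R, 𝒟, h𝒟, h𝒟u, hR⟩ := exists_delta_system_of_card_eq n hu hcard
  exact ⟨R, 𝒟, h𝒟.trans h𝒞', h𝒟u, hR⟩

theorem exists_delta_subfamily {S : Set ι} (hS : ¬S.Countable) (f : ι → Finset X)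
    (hf : ∀ v, {p ∈ S | f p = v}.Countable) :
    ∃ R, ∃ T ⊆ S, ¬T.Countable ∧ T.Pairwise fun p q => f p ∩ f q = R := by
  have himg : ¬(f '' S).Countable := by
    refine fun h => hS ((h.biUnion fun v _ => hf v).mono ?_)
    exact fun p hp => mem_biUnion (mem_image_of_mem f hp) ⟨hp, rfl⟩
  obtain ⟨R, 𝒟, h𝒟, h𝒟u, hR⟩ := exists_delta_system himg
  obtain ⟨T, hT, hbij⟩ := exists_subset_bijOn (S ∩ f ⁻¹' 𝒟) f
  have himgT : f '' T = 𝒟 := by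
    rw [hbij.image_eq, image_inter_preimage, inter_eq_right.2 h𝒟]
  refine ⟨R, T, hT.trans inter_subset_left, fun hc => h𝒟u (himgT ▸ hc.image f), ?_⟩
  intro p hp q hq hpq
  exact hR (himgT ▸ mem_image_of_mem f hp) (himgT ▸ mem_image_of_mem f hq)
    fun h => hpq (hbij.injOn hp hq h)

end DeltaSystem

universe u

theorem exists_injOn_omega1 {ι : Type u} {S : Set ι} (hS : ¬S.Countable) :
    ∃ g : Ordinal.{0} → ι, (∀ ξ < omega1, g ξ ∈ S) ∧ InjOn g (Iio omega1) := by
  have hcard : lift.{u} #(Iio omega1) ≤ lift.{1} #S := by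
    rw [Cardinal.mk_Iio_ordinal, omega1, card_ord]
    simpa using lt_of_not_ge (mt le_aleph0_iff_set_countable.1 hS)
  obtain ⟨e⟩ := lift_mk_le'.1 hcard
  obtain ⟨p₀, -⟩ : S.Nonempty := nonempty_iff_ne_empty.2 fun h => hS (h ▸ countable_empty)
  refine ⟨fun ξ => if h : ξ < omega1 then e ⟨ξ, h⟩ else p₀, fun ξ hξ => ?_, fun ξ hξ η hη h => ?_⟩
  · simp only [dif_pos hξ]
    exact (e _).2
  · simp only [dif_pos (show ξ < omega1 from hξ), dif_pos (show η < omega1 from hη)] at h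
    exact congrArg Subtype.val (e.injective (Subtype.ext h))

theorem containsNLuzinGap_of_uncountable {𝒜 : Set (Set ℕ)} {ι : Type*} {S : Set ι}
    (hS : ¬S.Countable) {n : ℕ} (m : ℕ) (w : ι → Fin n → Set ℕ)
    (hmem : ∀ p ∈ S, ∀ i, w p i ∈ 𝒜)
    (hinj : ∀ p ∈ S, ∀ q ∈ S, ∀ i j, w p i = w q j → p = q ∧ i = j)
    (hsep : ∀ p ∈ S, ∀ i j, i ≠ j → w p i ∩ w p j ⊆ Iio m)
    (hgap : S.Pairwise fun p q => ∃ i j, i ≠ j ∧ ∃ x, m ≤ x ∧ x ∈ w p i ∧ x ∈ w q j) :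
    ContainsNLuzinGap 𝒜 n := by
  obtain ⟨g, hgS, hg⟩ := exists_injOn_omega1 hS
  refine ⟨fun i ξ => w (g ξ) i, fun i ξ hξ => hmem _ (hgS ξ hξ) i, ?_, ?_, m, ?_, ?_⟩
  · exact fun i ξ hξ η hη hne h => hne (hg hξ hη (hinj _ (hgS ξ hξ) _ (hgS η hη) i i h).1)
  · exact fun i j hij ξ hξ η hη h => hij (hinj _ (hgS ξ hξ) _ (hgS η hη) i j h).2
  · exact fun i j hij ξ hξ => hsep _ (hgS ξ hξ) i j hij.ne
  · intro ξ hξ η hη hne hsub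
    obtain ⟨i, j, hij, x, hmx, hxi, hxj⟩ :=
      hgap (hgS ξ hξ) (hgS η hη) fun h => hne (hg hξ hη h)
    exact (hsub (mem_iUnion₂.2 ⟨i, j, mem_iUnion.2 ⟨hij, hxi, hxj⟩⟩)).not_ge hmx

theorem eqStar.union {A B C D : Set ℕ} (h₁ : eqStar A B) (h₂ : eqStar C D) :
    eqStar (A ∪ C) (B ∪ D) :=
  (Set.Finite.union h₁ h₂).subset union_symmDiff_union_subset

theorem eqStar.eventually_mem_iff {A B : Set ℕ} (h : eqStar A B) :
    ∀ᶠ x in atTop, (x ∈ A ↔ x ∈ B) := by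
  rw [← Nat.cofinite_eq_atTop]
  refine h.eventually_cofinite_notMem.mono fun x hx => ?_
  rw [mem_symmDiff] at hx
  tauto

theorem countable_setOf_eqStar (B : Set ℕ) : {A | eqStar A B}.Countable := by
  refine (Countable.ofPred_finite.image (symmDiff · B)).mono fun A hA => ?_
  exact ⟨_, hA, symmDiff_symmDiff_cancel_right B A⟩

theorem countable_setOf_represents (𝒜 : Set (Set ℕ)) (a b : Finset (Set ℕ)) :
    {p | Represents 𝒜 p a b}.Countable :=
  ((countable_setOf_eqStar _).prod (countable_setOf_eqStar _)).mono fun _ hp =>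
    mk_mem_prod hp.2.2.1 hp.2.2.2

theorem countable_setOf_represents_union (𝒜 : Set (Set ℕ)) (c : Finset (Set ℕ)) :
    {p | ∃ a b, Represents 𝒜 p a b ∧ a ∪ b = c}.Countable := by
  refine (c.powerset.countable_toSet.biUnion fun a _ => c.powerset.countable_toSet.biUnion
    fun b _ => countable_setOf_represents 𝒜 a b).mono ?_
  rintro p ⟨a, b, hp, rfl⟩
  exact mem_biUnion (Finset.mem_powerset.2 Finset.subset_union_left)
    (mem_biUnion (Finset.mem_powerset.2 Finset.subset_union_right) hp)

theorem Represents.union {𝒜 : Set (Set ℕ)} {p q : Set ℕ × Set ℕ} {a b a' b' : Finset (Set ℕ)}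
    (hp : Represents 𝒜 p a b) (hq : Represents 𝒜 q a' b') :
    Represents 𝒜 (p.1 ∪ q.1, p.2 ∪ q.2) (a ∪ a') (b ∪ b') := by
  refine ⟨?_, ?_, ?_, ?_⟩
  · rw [Finset.coe_union]; exact union_subset hp.1 hq.1
  · rw [Finset.coe_union]; exact union_subset hp.2.1 hq.2.1
  · rw [Finset.set_biUnion_union]; exact hp.2.2.1.union hq.2.2.1
  · rw [Finset.set_biUnion_union]; exact hp.2.2.2.union hq.2.2.2

theorem SplitCond.union {𝒜 : Set (Set ℕ)} {p q : Set ℕ × Set ℕ} (hp : SplitCond 𝒜 p)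
    (hq : SplitCond 𝒜 q) (h₁ : p.1 ∩ q.2 = ∅) (h₂ : q.1 ∩ p.2 = ∅) :
    SplitCond 𝒜 (p.1 ∪ q.1, p.2 ∪ q.2) := by
  obtain ⟨hp, a, b, hab⟩ := hp
  obtain ⟨hq, a', b', hab'⟩ := hq
  refine ⟨?_, _, _, hab.union hab'⟩
  simp only [union_inter_distrib_right, inter_union_distrib_left, hp, hq, h₁, h₂, union_empty]

theorem SplitCond.inter_union_inter_nonempty_of_not_compat {𝒜 : Set (Set ℕ)}
    {p q : Set ℕ × Set ℕ} (hp : SplitCond 𝒜 p) (hq : SplitCond 𝒜 q) (h : ¬Compat 𝒜 p q) :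
    (p.1 ∩ q.2 ∪ q.1 ∩ p.2).Nonempty := by
  by_contra! hpq
  rw [union_empty_iff] at hpq
  exact h ⟨_, hp.union hq hpq.1 hpq.2, ⟨subset_union_left, subset_union_left⟩,
    ⟨subset_union_right, subset_union_right⟩⟩

theorem Represents.disjoint {𝒜 : Set (Set ℕ)} (hinf : ∀ A ∈ 𝒜, A.Infinite)
    {p : Set ℕ × Set ℕ} {a b : Finset (Set ℕ)} (hp : p.1 ∩ p.2 = ∅) (h : Represents 𝒜 p a b) :
    Disjoint a b := by
  refine Finset.disjoint_left.2 fun C hCa hCb => ?_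
  have hC : ∃ᶠ x in atTop, x ∈ C := Nat.frequently_atTop_iff_infinite.2 (hinf C (h.1 hCa))
  obtain ⟨x, hxC, hx₁, hx₂⟩ :=
    (hC.and_eventually (h.2.2.1.eventually_mem_iff.and h.2.2.2.eventually_mem_iff)).exists
  exact (eq_empty_iff_forall_notMem.1 hp) x
    ⟨hx₁.2 (mem_iUnion₂.2 ⟨C, hCa, hxC⟩), hx₂.2 (mem_iUnion₂.2 ⟨C, hCb, hxC⟩)⟩

def RepresentsFrom (m : ℕ) (p : Set ℕ × Set ℕ) (a b : Finset (Set ℕ)) : Prop :=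
  ∀ x, m ≤ x → (x ∈ p.1 ↔ x ∈ ⋃ A ∈ a, A) ∧ (x ∈ p.2 ↔ x ∈ ⋃ B ∈ b, B)

section Uniform

open Classical

theorem Represents.exists_representsFrom {𝒜 : Set (Set ℕ)}
    (had : ∀ A ∈ 𝒜, ∀ B ∈ 𝒜, A ≠ B → (A ∩ B).Finite) {p : Set ℕ × Set ℕ}
    {a b : Finset (Set ℕ)} (h : Represents 𝒜 p a b) :
    ∃ m, RepresentsFrom m p a b ∧ ∀ C ∈ a ∪ b, ∀ D ∈ a ∪ b, C ≠ D → C ∩ D ⊆ Iio m := by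
  have hmem : ∀ C ∈ a ∪ b, C ∈ 𝒜 := fun C hC =>
    (Finset.mem_union.1 hC).elim (fun hC => h.1 hC) fun hC => h.2.1 hC
  have hsep : ∀ᶠ x in atTop, ∀ C ∈ a ∪ b, ∀ D ∈ a ∪ b, C ≠ D → x ∉ C ∩ D := by
    simp only [eventually_all_finset, eventually_imp_distrib_left]
    intro C hC D hD hCD
    exact Nat.cofinite_eq_atTop ▸ (had C (hmem C hC) D (hmem D hD) hCD).eventually_cofinite_notMem
  obtain ⟨m, hm⟩ := eventually_atTop.1
    ((h.2.2.1.eventually_mem_iff.and h.2.2.2.eventually_mem_iff).and hsep)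
  exact ⟨m, fun x hx => (hm x hx).1,
    fun C hC D hD hCD x hx => lt_of_not_ge fun hmx => (hm x hmx).2 C hC D hD hCD hx⟩

structure UniformAntichain (𝒜 : Set (Set ℕ)) (S : Set (Set ℕ × Set ℕ))
    (a b : Set ℕ × Set ℕ → Finset (Set ℕ)) (R : Finset (Set ℕ)) (m n : ℕ) : Prop where
  fst_inter_snd : ∀ p ∈ S, p.1 ∩ p.2 = ∅
  cross : S.Pairwise fun p q => (p.1 ∩ q.2 ∪ q.1 ∩ p.2).Nonempty
  subset : ∀ p ∈ S, ↑(a p ∪ b p) ⊆ 𝒜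
  disjoint : ∀ p ∈ S, Disjoint (a p) (b p)
  delta : S.Pairwise fun p q => (a p ∪ b p) ∩ (a q ∪ b q) = R
  representsFrom : ∀ p ∈ S, RepresentsFrom m p (a p) (b p)
  inter_subset : ∀ p ∈ S, ∀ C ∈ a p ∪ b p, ∀ D ∈ a p ∪ b p, C ≠ D → C ∩ D ⊆ Iio m
  card_sdiff : ∀ p ∈ S, ((a p ∪ b p) \ R).card = n
  fst_inter_Iio : ∀ p ∈ S, ∀ q ∈ S, p.1 ∩ Iio m = q.1 ∩ Iio m
  fst_inter_root : ∀ p ∈ S, ∀ q ∈ S, a p ∩ R = a q ∩ R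
  snd_inter_root : ∀ p ∈ S, ∀ q ∈ S, b p ∩ R = b q ∩ R

namespace UniformAntichain

variable {𝒜 : Set (Set ℕ)} {S : Set (Set ℕ × Set ℕ)} {a b : Set ℕ × Set ℕ → Finset (Set ℕ)}
  {R : Finset (Set ℕ)} {m n : ℕ}

theorem exists_mem_sdiff_root (hu : UniformAntichain 𝒜 S a b R m n) {p q : Set ℕ × Set ℕ}
    (hp : p ∈ S) (hq : q ∈ S) {x : ℕ} (hxp : x ∈ p.1) (hxq : x ∈ q.2) :
    m ≤ x ∧ (∃ C ∈ a p \ R, x ∈ C) ∧ ∃ D ∈ b q \ R, x ∈ D := by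
  have hxq₁ : x ∉ q.1 := fun h => eq_empty_iff_forall_notMem.1 (hu.fst_inter_snd q hq) x ⟨h, hxq⟩
  have hxp₂ : x ∉ p.2 := fun h => eq_empty_iff_forall_notMem.1 (hu.fst_inter_snd p hp) x ⟨hxp, h⟩
  have hmx : m ≤ x := by
    by_contra! hxm
    have : x ∈ q.1 ∩ Iio m := hu.fst_inter_Iio p hp q hq ▸ ⟨hxp, hxm⟩
    exact hxq₁ this.1
  obtain ⟨hp₁, hp₂⟩ := hu.representsFrom p hp x hmx
  obtain ⟨hq₁, hq₂⟩ := hu.representsFrom q hq x hmx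
  obtain ⟨C, hC, hxC⟩ := mem_iUnion₂.1 (hp₁.1 hxp)
  obtain ⟨D, hD, hxD⟩ := mem_iUnion₂.1 (hq₂.1 hxq)
  refine ⟨hmx, ⟨C, Finset.mem_sdiff.2 ⟨hC, fun hCR => hxq₁ ?_⟩, hxC⟩,
    D, Finset.mem_sdiff.2 ⟨hD, fun hDR => hxp₂ ?_⟩, hxD⟩
  · have hCq : C ∈ a q ∩ R := hu.fst_inter_root p hp q hq ▸ Finset.mem_inter.2 ⟨hC, hCR⟩
    exact hq₁.2 (mem_iUnion₂.2 ⟨C, (Finset.mem_inter.1 hCq).1, hxC⟩)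
  · have hDp : D ∈ b p ∩ R := hu.snd_inter_root q hq p hp ▸ Finset.mem_inter.2 ⟨hD, hDR⟩
    exact hp₂.2 (mem_iUnion₂.2 ⟨D, (Finset.mem_inter.1 hDp).1, hxD⟩)

theorem containsNLuzinGap (hu : UniformAntichain 𝒜 S a b R m n) (hS : ¬S.Countable) :
    ContainsNLuzinGap 𝒜 n := by
  choose! w hw_inj hw_range using fun p hp =>
    Finset.exists_injective_fin_of_card_eq (hu.card_sdiff p hp)
  have hw_mem : ∀ p ∈ S, ∀ i, w p i ∈ (a p ∪ b p) \ R := fun p hp i => by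
    rw [← Finset.mem_coe, ← hw_range p hp]
    exact mem_range_self i
  -- Fixing the positions of the members of `a p` ensures that an `a`-member of one condition and a
  -- `b`-member of another never carry the same index.
  obtain ⟨I, T, hTS, hTu, hI⟩ :=
    exists_uncountable_subset_fiber hS (fun p => {i | w p i ∈ a p}) (to_countable _)
  have hI_iff : ∀ p ∈ T, ∀ i, w p i ∈ a p ↔ i ∈ I := fun p hp i => by rw [← hI p hp]; rfl
  have hgap : ∀ p ∈ T, ∀ q ∈ T, ∀ x, x ∈ p.1 → x ∈ q.2 →
      ∃ i j, i ≠ j ∧ m ≤ x ∧ x ∈ w p i ∧ x ∈ w q j := by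
    intro p hp q hq x hxp hxq
    obtain ⟨hmx, ⟨C, hC, hxC⟩, D, hD, hxD⟩ := hu.exists_mem_sdiff_root (hTS hp) (hTS hq) hxp hxq
    obtain ⟨i, rfl⟩ : C ∈ range (w p) := hw_range p (hTS hp) ▸
      Finset.sdiff_subset_sdiff Finset.subset_union_left subset_rfl hC
    obtain ⟨j, rfl⟩ : D ∈ range (w q) := hw_range q (hTS hq) ▸
      Finset.sdiff_subset_sdiff Finset.subset_union_right subset_rfl hD
    refine ⟨i, j, fun hij => ?_, hmx, hxC, hxD⟩
    have hj : w q j ∈ a q := (hI_iff q hq j).2 (hij ▸ (hI_iff p hp i).1 (Finset.mem_sdiff.1 hC).1)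
    exact Finset.disjoint_left.1 (hu.disjoint q (hTS hq)) hj (Finset.mem_sdiff.1 hD).1
  refine containsNLuzinGap_of_uncountable hTu m w ?_ ?_ ?_ ?_
  · exact fun p hp i => hu.subset p (hTS hp) (Finset.mem_sdiff.1 (hw_mem p (hTS hp) i)).1
  · intro p hp q hq i j h
    by_cases hpq : p = q
    · subst hpq
      exact ⟨rfl, hw_inj p (hTS hp) h⟩
    · have hR := hu.delta (hTS hp) (hTS hq) hpq
      have hpi := Finset.mem_sdiff.1 (hw_mem p (hTS hp) i)
      have hqj := Finset.mem_sdiff.1 (hw_mem q (hTS hq) j)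
      exact absurd (hR ▸ Finset.mem_inter.2 ⟨hpi.1, h ▸ hqj.1⟩) hpi.2
  · intro p hp i j hij
    exact hu.inter_subset p (hTS hp) _ (Finset.mem_sdiff.1 (hw_mem p (hTS hp) i)).1 _
      (Finset.mem_sdiff.1 (hw_mem p (hTS hp) j)).1 ((hw_inj p (hTS hp)).ne hij)
  · intro p hp q hq hpq
    obtain ⟨x, ⟨hxp, hxq⟩ | ⟨hxq, hxp⟩⟩ := hu.cross (hTS hp) (hTS hq) hpq
    · obtain ⟨i, j, hij, hx⟩ := hgap p hp q hq x hxp hxq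
      exact ⟨i, j, hij, x, hx⟩
    · obtain ⟨i, j, hij, hmx, hxi, hxj⟩ := hgap q hq p hp x hxq hxp
      exact ⟨j, i, hij.symm, x, hmx, hxj, hxi⟩

end UniformAntichain

theorem exists_uniformAntichain {𝒜 : Set (Set ℕ)} (h𝒜 : ADFamily 𝒜)
    {P : Set (Set ℕ × Set ℕ)} (hP : SplitAntichain 𝒜 P) (hPu : ¬P.Countable) :
    ∃ S a b R m n, ¬S.Countable ∧ UniformAntichain 𝒜 S a b R m n := by
  choose! a b hab using fun p hp => (hP.1 p hp).2
  choose! m hm using fun p hp => (hab p hp).exists_representsFrom h𝒜.2.2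
  have hfiber : ∀ v, {p ∈ P | a p ∪ b p = v}.Countable := fun v => by
    refine (countable_setOf_represents_union 𝒜 v).mono fun p hp => ?_
    exact ⟨a p, b p, hab p hp.1, hp.2⟩
  obtain ⟨R, S, hSP, hSu, hΔ⟩ := exists_delta_subfamily hPu (fun p => a p ∪ b p) hfiber
  obtain ⟨⟨m₀, n⟩, T, hTS, hTu, hmn⟩ := exists_uncountable_subset_fiber hSu
    (fun p => (m p, ((a p ∪ b p) \ R).card)) (to_countable _)
  have hfin : ((fun p => (p.1 ∩ Iio m₀, a p ∩ R, b p ∩ R)) '' T).Finite := by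
    refine ((finite_Iio m₀).finite_subsets.prod
      (R.powerset.finite_toSet.prod R.powerset.finite_toSet)).subset ?_
    rintro _ ⟨p, -, rfl⟩
    exact ⟨inter_subset_right, Finset.mem_powerset.2 Finset.inter_subset_right,
      Finset.mem_powerset.2 Finset.inter_subset_right⟩
  obtain ⟨_, U, hUT, hUu, htr⟩ := exists_uncountable_subset_fiber hTu _ hfin.countable
  have htr' : ∀ p ∈ U, ∀ q ∈ U,
      (p.1 ∩ Iio m₀, a p ∩ R, b p ∩ R) = (q.1 ∩ Iio m₀, a q ∩ R, b q ∩ R) :=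
    fun p hp q hq => (htr p hp).trans (htr q hq).symm
  have hUP : U ⊆ P := hUT.trans (hTS.trans hSP)
  have hm₀ : ∀ p ∈ U, m p = m₀ := fun p hp => congrArg Prod.fst (hmn p (hUT hp))
  refine ⟨U, a, b, R, m₀, n, hUu,
    { fst_inter_snd := fun p hp => (hP.1 p (hUP hp)).1
      cross := fun p hp q hq hpq => (hP.1 p (hUP hp)).inter_union_inter_nonempty_of_not_compat
        (hP.1 q (hUP hq)) (hP.2 p (hUP hp) q (hUP hq) hpq)
      subset := fun p hp => ?_
      disjoint := fun p hp => (hab p (hUP hp)).disjoint h𝒜.2.1 (hP.1 p (hUP hp)).1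
      delta := hΔ.mono (hUT.trans hTS)
      representsFrom := fun p hp => hm₀ p hp ▸ (hm p (hUP hp)).1
      inter_subset := fun p hp => hm₀ p hp ▸ (hm p (hUP hp)).2
      card_sdiff := fun p hp => congrArg Prod.snd (hmn p (hUT hp))
      fst_inter_Iio := fun p hp q hq => congrArg Prod.fst (htr' p hp q hq)
      fst_inter_root := fun p hp q hq => congrArg (·.2.1) (htr' p hp q hq)
      snd_inter_root := fun p hp q hq => congrArg (·.2.2) (htr' p hp q hq) }⟩
  rw [Finset.coe_union]
  exact union_subset (hab p (hUP hp)).1 (hab p (hUP hp)).2.1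

end Uniform

/-- if `ℙ_𝒜` has an uncountable antichain then `𝒜` contains an `n`-Luzin
gap for some `n`. -/
theorem statement7 (𝒜 : Set (Set ℕ)) (h𝒜 : ADFamily 𝒜)
    (h : ∃ P : Set (Set ℕ × Set ℕ), SplitAntichain 𝒜 P ∧ ¬P.Countable) :
    ∃ n : ℕ, ContainsNLuzinGap 𝒜 n := by
  obtain ⟨P, hP, hPu⟩ := h
  obtain ⟨S, a, b, R, m, n, hSu, hu⟩ := exists_uniformAntichain h𝒜 hP hPu
  exact ⟨n, hu.containsNLuzinGap hSu⟩
end
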